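/- arXiv:2503.23206 — 7 statements merged into one kernel-verified Lean document; each statement's English description precedes it below -/
import Mathlib

section
/- Let X be the undirected graph consisting of a single undirected edge (K₂) and let D₂ be the directed graph with a single directed edge y → y'. Then for every k ∈ ℕ, there is no homomorphism from K₂ to the k-fold Bob power of D₂, but there is a homomorphism from K₂ to the 2-fold Alice power of D₂. -/
/-- The arc relation of the `k`-fold Alice power of a digraph. -/
def aliceArc {α : Type} (E : α → α → Prop) (k : ℕ) :
    (Fin k → α) → (Fin k → α) → Prop :=
  fun u v => ∃ j : Fin k, E (u j) (v j)

/-- The arc relation of the `k`-fold Bob power of a digraph. -/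
def bobArc {α : Type} (E : α → α → Prop) (k : ℕ) :
    (Fin k × α) → (Fin k × α) → Prop :=
  fun p q => ∀ s : Fin k, ∃ a b : α, E a b ∧ (p.1 = s → p.2 = a) ∧ (q.1 = s → q.2 = b)

/-- `K₂`: the digraph on two vertices with arcs in both directions. -/
def K2 (a b : Bool) : Prop := a ≠ b

/-- `D₂`: the digraph on two vertices with a single arc `false → true`. -/
def D2 (a b : Bool) : Prop := a = false ∧ b = true

/-- There is no homomorphism from `K₂` to any Bob power of `D₂`, but there is one
from `K₂` to the 2-fold Alice power of `D₂`. -/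
theorem K2_bob_vs_alice :
    (∀ k : ℕ, ¬ ∃ f : Bool → Fin k × Bool,
        ∀ a b : Bool, K2 a b → bobArc D2 k (f a) (f b)) ∧
    (∃ f : Bool → (Fin 2 → Bool),
        ∀ a b : Bool, K2 a b → aliceArc D2 2 (f a) (f b)) := by
  constructor
  · rintro k ⟨f, hf⟩
    have h1 := hf false true (by simp [K2]) (f false).1
    have h2 := hf true false (by simp [K2]) (f false).1
    obtain ⟨a, b, ⟨ha, hb⟩, hp, -⟩ := h1
    obtain ⟨a', b', ⟨ha', hb'⟩, -, hq⟩ := h2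
    have e1 : (f false).2 = false := by rw [hp rfl, ha]
    have e2 : (f false).2 = true := by rw [hq rfl, hb']
    simp [e1] at e2
  · refine ⟨fun a => if a then ![true, false] else ![false, true], ?_⟩
    rintro a b hab
    cases a <;> cases b <;> simp [K2] at hab ⊢
    · exact ⟨0, by simp [D2]⟩
    · exact ⟨1, by simp [D2]⟩
end

section
/- Let Y be a relational structure that is a core, and suppose there is a homomorphism h from the 2-fold Alice power Y↑2 to Y. Then every permutation σ of the domain Y is an automorphism of Y. -/
/-- `f` is a homomorphism of relational structures (given by their families of relations). -/
def IsHom {ι : Type} {ar : ι → ℕ} {α β : Type}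
    (relA : ∀ i : ι, Set (Fin (ar i) → α)) (relB : ∀ i : ι, Set (Fin (ar i) → β))
    (f : α → β) : Prop :=
  ∀ i : ι, ∀ t : Fin (ar i) → α, t ∈ relA i → (fun p => f (t p)) ∈ relB i

/-- The `k`-fold Alice power of a relational structure. -/
def alicePow {ι : Type} {ar : ι → ℕ} {α : Type} (k : ℕ)
    (rel : ∀ i : ι, Set (Fin (ar i) → α)) :
    ∀ i : ι, Set (Fin (ar i) → (Fin k → α)) :=
  fun i => {t | ∃ j : Fin k, (fun p => t p j) ∈ rel i}

/-- A (finite) structure is a core: every endomorphism is an automorphism,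
i.e. has a two-sided inverse which is also a homomorphism. -/
def IsCore {ι : Type} {ar : ι → ℕ} {α : Type}
    (rel : ∀ i : ι, Set (Fin (ar i) → α)) : Prop :=
  ∀ f : α → α, IsHom rel rel f →
    ∃ g : α → α, IsHom rel rel g ∧ f ∘ g = id ∧ g ∘ f = id

/-- If a finite core `Y` admits a homomorphism from its 2-fold Alice power, then every
permutation of its domain is an automorphism of `Y`. -/
theorem perm_aut_of_alicePow_hom {ι α : Type} [Fintype α] {ar : ι → ℕ}
    (rel : ∀ i : ι, Set (Fin (ar i) → α)) (hcore : IsCore rel)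
    (hhom : ∃ h : (Fin 2 → α) → α, IsHom (alicePow 2 rel) rel h) :
    ∀ σ : Equiv.Perm α, IsHom rel rel σ ∧ IsHom rel rel σ.symm := by
  obtain ⟨h, hh⟩ := hhom
  intro σ
  -- f x = h (x, σ x) is an endomorphism
  set f : α → α := fun x => h ![x, σ x] with hf
  have hfhom : IsHom rel rel f := by
    intro i t ht
    exact hh i (fun p => ![t p, σ (t p)]) ⟨0, by simpa using ht⟩
  -- f' x = h (σ⁻¹ x, x) is an endomorphism
  set f' : α → α := fun x => h ![σ.symm x, x] with hf'
  have hf'hom : IsHom rel rel f' := by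
    intro i t ht
    exact hh i (fun p => ![σ.symm (t p), t p]) ⟨1, by simpa using ht⟩
  obtain ⟨g, hg, hfg, hgf⟩ := hcore f hfhom
  obtain ⟨g', hg', hfg', hgf'⟩ := hcore f' hf'hom
  -- key identities
  have key1 : ∀ x, g' (f x) = σ x := by
    intro x
    have : f' (σ x) = f x := by simp [hf, hf']
    calc g' (f x) = g' (f' (σ x)) := by rw [this]
      _ = σ x := congrFun hgf' (σ x)
  have key2 : ∀ x, g (f' x) = σ.symm x := by
    intro x
    have : f (σ.symm x) = f' x := by simp [hf, hf']
    calc g (f' x) = g (f (σ.symm x)) := by rw [this]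
      _ = σ.symm x := congrFun hgf (σ.symm x)
  constructor
  · intro i t ht
    have := hg' i _ (hfhom i t ht)
    simpa [key1] using this
  · intro i t ht
    have := hg i _ (hf'hom i t ht)
    simpa [key2] using this
end

section
/- Let Y be a core relational structure. There is a homomorphism from the 2-fold Alice power Y↑2 to Y if and only if the domain of Y has size at most 1. -/
/-- A finite core `Y` admits a homomorphism from its 2-fold Alice power iff its
domain has size at most 1. -/
theorem alicePow_hom_iff_card_le_one {ι α : Type} [Fintype α] {ar : ι → ℕ}
    (rel : ∀ i : ι, Set (Fin (ar i) → α)) (hcore : IsCore rel) :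
    (∃ h : (Fin 2 → α) → α, IsHom (alicePow 2 rel) rel h) ↔ Fintype.card α ≤ 1 := by
  constructor
  · rintro ⟨h, hh⟩
    classical
    by_contra hcard
    push_neg at hcard
    obtain ⟨a, b, hab⟩ := Fintype.exists_pair_of_one_lt_card hcard
    have key : ∀ f : α → α, IsHom rel rel (fun x => h ![x, f x]) := by
      intro f i t ht
      have := hh i (fun p => ![t p, f (t p)]) ⟨0, by simpa using ht⟩
      simpa using this
    have key2 : IsHom rel rel (fun x => h ![b, x]) := by
      intro i t ht
      have := hh i (fun p => ![b, t p]) ⟨1, by simpa using ht⟩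
      simpa using this
    obtain ⟨g, hg, hfg, hgf⟩ := hcore _ key2
    have hy : h ![b, g (h ![a, a])] = h ![a, a] := congrFun hfg (h ![a, a])
    set y := g (h ![a, a]) with hydef
    set f : α → α := fun x => if x = a then a else y with hf
    obtain ⟨g2, hg2, hfg2, hgf2⟩ := hcore _ (key f)
    have inj : Function.Injective (fun x => h ![x, f x]) := by
      intro u v huv
      have := congrArg g2 huv
      have h1 := congrFun hgf2 u
      have h2 := congrFun hgf2 v
      simp only [Function.comp_apply, id_eq] at h1 h2
      rw [h1, h2] at this
      exact this
    have : a = b := by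
      apply inj
      simp [hf, hy, Ne.symm hab]
    exact hab this
  · intro hcard
    have : Subsingleton α := Fintype.card_le_one_iff_subsingleton.mp hcard
    refine ⟨fun t => t 0, ?_⟩
    intro i t ht
    obtain ⟨j, hj⟩ := ht
    have he : (fun p => t p 0) = fun p => t p j := by
      funext p; exact Subsingleton.elim _ _
    show (fun p => t p 0) ∈ rel i
    rw [he]; exact hj
end

section
/- Let X be the Boolean structure with one 4-ary relation R^X = {(0,0,1,1)} and Y the Boolean structure with one 4-ary relation R^Y = {(0,1,1,1),(1,1,1,0)}. Then there is a homomorphism from X to the 2-fold Bob power of Y, but for every k ∈ ℕ there is no homomorphism from X to the k-fold Alice power of Y. -/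
/-- The `k`-fold Bob power of a relational structure, on universe `[k] × Y`. -/
def bobPow {ι : Type} {ar : ι → ℕ} {α : Type} (k : ℕ)
    (rel : ∀ i : ι, Set (Fin (ar i) → α)) :
    ∀ i : ι, Set (Fin (ar i) → (Fin k × α)) :=
  fun i => {t | ∀ s : Fin k, ∃ u ∈ rel i, ∀ j, (t j).1 = s → (t j).2 = u j}

/-- The Boolean structure `X` with one 4-ary relation `{(0,0,1,1)}`. -/
def relX : ∀ _ : Unit, Set (Fin 4 → Bool) :=
  fun _ => {![false, false, true, true]}

/-- The Boolean structure `Y` with one 4-ary relation `{(0,1,1,1), (1,1,1,0)}`. -/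
def relY : ∀ _ : Unit, Set (Fin 4 → Bool) :=
  fun _ => {![false, true, true, true], ![true, true, true, false]}

/-- `X` maps homomorphically to the 2-fold Bob power of `Y`, but to no Alice power of `Y`. -/
theorem bob_beats_alice :
    (∃ f : Bool → Fin 2 × Bool, IsHom relX (bobPow 2 relY) f) ∧
    (∀ k : ℕ, ¬ ∃ f : Bool → (Fin k → Bool), IsHom relX (alicePow k relY) f) := by
  constructor
  · refine ⟨fun b => (if b then 1 else 0, true), ?_⟩
    intro i t ht
    have ht' : t = ![false, false, true, true] := ht
    subst ht'
    intro s
    fin_cases s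
    · refine ⟨![true, true, true, false], Or.inr rfl, ?_⟩
      intro j
      fin_cases j <;> simp
    · refine ⟨![false, true, true, true], Or.inl rfl, ?_⟩
      intro j
      fin_cases j <;> simp
  · rintro k ⟨f, hf⟩
    have h := hf () ![false, false, true, true] rfl
    obtain ⟨j, hj⟩ := h
    rcases hj with hj | hj
    · have h0 := congrFun hj 0
      have h1 := congrFun hj 1
      simp at h0 h1
      rw [h0] at h1
      exact absurd h1 (by simp)
    · have h2 := congrFun hj 2
      have h3 := congrFun hj 3
      simp at h2 h3
      rw [h2] at h3
      exact absurd h3 (by simp)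
end

section
/- Fix a finite set S, d ∈ ℕ, and two commuting projection-valued measurements E = {E_s} and F = {F_s} in PVM over ℂ^d indexed by S. Suppose there exists an orthonormal basis {v₁,…,v_d} of ℂ^d and a partition {τ_s : s ∈ S} of [d] such that for each s ∈ S and each j ∈ τ_s, ‖E_s v_j‖ > α and ‖F_s v_j‖ > α, where α = sqrt((1/2)(1 + sqrt(1 − 1/d²))). Then E_s = F_s for all s ∈ S. -/
/-!
Projectors summing to `1` are mutually orthogonal (`E_s ≤ 1 - E_t`), hence so are the commuting
products `E_s F_s`, and `Q = ∑ s, E_s F_s` is a projector.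
For commuting projectors `(1 - E_s)(1 - F_s) ≥ 0`, i.e. `E_s F_s ≥ E_s + F_s - 1`; the hypothesis
therefore gives `⟪v_j, (1 - Q) v_j⟫ < 1 - β` with `β = √(1 - 1/d²)`, and `d (1 - β) ≤ 1`.
Summing over the basis, the projector `1 - Q` has trace (= rank) less than one, so `Q = 1`.
Finally, `∑ s, E_s F_s = 1` forces `E_s F_t = 0` for `s ≠ t`, whence `E_s = E_s F_s = F_s`.
-/

noncomputable section

/-- An orthogonal projector on the Hilbert space `ℂ^d`. -/
def IsProjector {d : ℕ}
    (E : EuclideanSpace ℂ (Fin d) →L[ℂ] EuclideanSpace ℂ (Fin d)) : Prop :=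
  IsSelfAdjoint E ∧ E ∘L E = E

/-- A projection-valued measurement over `ℂ^d` indexed by a finite set `S`. -/
def IsPVM {d : ℕ} {S : Type} [Fintype S]
    (E : S → (EuclideanSpace ℂ (Fin d) →L[ℂ] EuclideanSpace ℂ (Fin d))) : Prop :=
  (∀ s, IsProjector (E s)) ∧ ∑ s, E s = 1

open scoped InnerProductSpace
open Finset RCLike

section Idempotents

variable {R : Type*} [Ring R] {I : Type*} {e f : I → R}

theorem OrthogonalIdempotents.mul_of_commute (he : OrthogonalIdempotents e)
    (hf : ∀ i, IsIdempotentElem (f i)) (hef : ∀ i j, Commute (e i) (f j)) :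
    OrthogonalIdempotents fun i ↦ e i * f i where
  idem i := (he.idem i).mul_of_commute (hef i i) (hf i)
  ortho i j hij := by
    show e i * f i * (e j * f j) = 0
    rw [mul_assoc, ← mul_assoc (f i), ← (hef j i).eq, mul_assoc, ← mul_assoc, he.ortho hij,
      zero_mul]

theorem CompleteOrthogonalIdempotents.eq_of_sum_mul_eq_one [Fintype I]
    (he : CompleteOrthogonalIdempotents e) (hf : CompleteOrthogonalIdempotents f)
    (hef : ∀ i j, Commute (e i) (f j)) (hsum : ∑ k, e k * f k = 1) : e = f := by
  have hcross : ∀ i j, i ≠ j → e i * f j = 0 := by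
    intro i j hij
    calc e i * f j = ∑ k, e i * e k * (f j * f k) := by
          rw [← mul_one (e i * f j), ← hsum, mul_sum]
          refine sum_congr rfl fun k _ ↦ ?_
          rw [mul_assoc, ← mul_assoc (f j), ← (hef k j).eq]
          simp only [mul_assoc]
      _ = 0 := sum_eq_zero fun k _ ↦ by
          obtain rfl | hik := eq_or_ne i k
          · rw [hf.ortho hij.symm, mul_zero]
          · rw [he.ortho hik, zero_mul]
  funext i
  calc e i = ∑ j, e i * f j := by rw [← mul_sum, hf.complete, mul_one]
    _ = e i * f i := Fintype.sum_eq_single i fun j hj ↦ hcross i j hj.symm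
    _ = ∑ j, e j * f i := (Fintype.sum_eq_single i fun j hj ↦ hcross j i hj).symm
    _ = f i := by rw [← sum_mul, he.complete, one_mul]

end Idempotents

theorem CompleteOrthogonalIdempotents.of_isStarProjection_of_sum_eq_one {A : Type*}
    [CStarAlgebra A] [PartialOrder A] [StarOrderedRing A] {I : Type*} [Fintype I] {p : I → A}
    (hp : ∀ i, IsStarProjection (p i)) (hsum : ∑ i, p i = 1) :
    CompleteOrthogonalIdempotents p := by
  refine (CompleteOrthogonalIdempotents.iff_ortho_complete).mpr ⟨fun i j hij ↦ ?_, hsum⟩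
  have hle : p i ≤ 1 - p j := by
    rw [le_sub_iff_add_le, ← hsum]
    exact add_le_sum (fun k _ ↦ (hp k).nonneg) (mem_univ i) (mem_univ j) hij
  have := ((hp i).le_iff_mul_eq_left (hp j).one_sub).mp hle
  rwa [mul_sub, mul_one, sub_eq_self] at this

section StarProjections

variable {R : Type*} [Ring R] [StarRing R] {I : Type*} [Fintype I] {e f : I → R}

theorem IsStarProjection.add_sub_one_le_mul [PartialOrder R] [StarOrderedRing R] {p q : R}
    (hp : IsStarProjection p) (hq : IsStarProjection q) (hpq : Commute p q) :
    p + q - 1 ≤ p * q := by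
  have := (hp.add_sub_mul_of_commute hpq hq).le_one
  rwa [sub_le_iff_le_add, ← sub_le_iff_le_add'] at this

theorem add_sub_one_le_sum_mul [PartialOrder R] [StarOrderedRing R]
    (he : ∀ i, IsStarProjection (e i)) (hf : ∀ i, IsStarProjection (f i))
    (hef : ∀ i, Commute (e i) (f i)) (i : I) :
    e i + f i - 1 ≤ ∑ k, e k * f k :=
  ((he i).add_sub_one_le_mul (hf i) (hef i)).trans <|
    single_le_sum (fun k _ ↦ ((he k).mul (hf k) (hef k)).nonneg) (mem_univ i)

theorem isStarProjection_sum_mul (he : ∀ i, IsStarProjection (e i))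
    (hf : ∀ i, IsStarProjection (f i)) (horth : Pairwise fun i j ↦ e i * e j = 0)
    (hef : ∀ i j, Commute (e i) (f j)) :
    IsStarProjection (∑ i, e i * f i) :=
  ⟨(OrthogonalIdempotents.mul_of_commute ⟨fun i ↦ (he i).isIdempotentElem, horth⟩
      (fun i ↦ (hf i).isIdempotentElem) hef).isIdempotentElem_sum,
    isSelfAdjoint_sum _ fun i _ ↦ ((he i).mul (hf i) (hef i i)).isSelfAdjoint⟩

end StarProjections

section InnerProductSpace

variable {𝕜 V : Type*} [RCLike 𝕜] [NormedAddCommGroup V] [InnerProductSpace 𝕜 V]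

theorem ContinuousLinearMap.re_inner_apply_le_of_le {S T : V →L[𝕜] V} (h : S ≤ T) (x : V) :
    re ⟪x, S x⟫_𝕜 ≤ re ⟪x, T x⟫_𝕜 := by
  have := ContinuousLinearMap.IsPositive.re_inner_nonneg_right h x
  rwa [sub_apply, inner_sub_right, map_sub, sub_nonneg] at this

variable [CompleteSpace V]

theorem IsStarProjection.inner_apply_eq_inner_apply_apply {p : V →L[𝕜] V}
    (hp : IsStarProjection p) (x y : V) : ⟪x, p y⟫_𝕜 = ⟪p x, p y⟫_𝕜 := by
  calc ⟪x, p y⟫_𝕜 = ⟪x, p (p y)⟫_𝕜 := congr(⟪x, $(hp.isIdempotentElem.eq) y⟫_𝕜).symm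
    _ = ⟪p x, p y⟫_𝕜 := (hp.isSelfAdjoint.isSymmetric x (p y)).symm

theorem IsStarProjection.re_inner_apply_self {p : V →L[𝕜] V} (hp : IsStarProjection p) (x : V) :
    re ⟪x, p x⟫_𝕜 = ‖p x‖ ^ 2 := by
  rw [hp.inner_apply_eq_inner_apply_apply, inner_self_eq_norm_sq]

/-- A nonzero projector has trace, i.e. rank, at least one. -/
theorem IsStarProjection.eq_zero_of_sum_norm_apply_sq_lt_one {ι : Type*} [Fintype ι]
    {p : V →L[𝕜] V} (hp : IsStarProjection p) (b : OrthonormalBasis ι 𝕜 V)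
    (h : ∑ i, ‖p (b i)‖ ^ 2 < 1) : p = 0 := by
  ext x
  have hle : ‖p x‖ ^ 2 ≤ (∑ i, ‖p (b i)‖ ^ 2) * ‖p x‖ ^ 2 :=
    calc ‖p x‖ ^ 2 = ∑ i, ‖⟪p (b i), p x⟫_𝕜‖ ^ 2 := by
          rw [← b.sum_sq_norm_inner_right (p x)]
          simp only [← hp.inner_apply_eq_inner_apply_apply]
      _ ≤ ∑ i, ‖p (b i)‖ ^ 2 * ‖p x‖ ^ 2 := sum_le_sum fun i _ ↦ by
          rw [← mul_pow]
          exact pow_le_pow_left₀ (norm_nonneg _) (norm_inner_le_norm _ _) 2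
      _ = (∑ i, ‖p (b i)‖ ^ 2) * ‖p x‖ ^ 2 := (sum_mul ..).symm
  have : ‖p x‖ ^ 2 = 0 := by nlinarith [sq_nonneg ‖p x‖]
  simpa using this

theorem IsStarProjection.eq_zero_of_forall_norm_apply_sq_lt {ι : Type*} [Fintype ι]
    {p : V →L[𝕜] V} (hp : IsStarProjection p) (b : OrthonormalBasis ι 𝕜 V) {c : ℝ}
    (h : ∀ i, ‖p (b i)‖ ^ 2 < c) (hc : Fintype.card ι * c ≤ 1) : p = 0 := by
  refine hp.eq_zero_of_sum_norm_apply_sq_lt_one b ?_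
  rcases isEmpty_or_nonempty ι with hι | hι
  · simp
  calc ∑ i, ‖p (b i)‖ ^ 2 < ∑ _i : ι, c := sum_lt_sum_of_nonempty univ_nonempty fun i _ ↦ h i
    _ = Fintype.card ι * c := by simp
    _ ≤ 1 := hc

theorem IsStarProjection.norm_one_sub_apply_sq_le {P p q : V →L[𝕜] V} (hP : IsStarProjection P)
    (hp : IsStarProjection p) (hq : IsStarProjection q) (h : p + q - 1 ≤ P) (x : V) :
    ‖(1 - P) x‖ ^ 2 ≤ 2 * ‖x‖ ^ 2 - ‖p x‖ ^ 2 - ‖q x‖ ^ 2 := by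
  have hx := ContinuousLinearMap.re_inner_apply_le_of_le h x
  rw [← hP.one_sub.re_inner_apply_self]
  simp only [sub_apply, add_apply, one_apply_eq_self, inner_sub_right, inner_add_right, map_sub,
    map_add, hp.re_inner_apply_self, hq.re_inner_apply_self, inner_self_eq_norm_sq] at hx ⊢
  linarith

end InnerProductSpace

theorem natCast_mul_one_sub_sqrt_one_sub_one_div_sq_le_one (n : ℕ) :
    n * (1 - √(1 - 1 / (n : ℝ) ^ 2)) ≤ 1 := by
  rcases Nat.eq_zero_or_pos n with rfl | hn
  · simp
  have ht : 1 / (n : ℝ) ≤ 1 := by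
    rw [div_le_one (by positivity)]
    exact_mod_cast hn
  have ht0 : 0 < 1 / (n : ℝ) := by positivity
  have hsqrt : 1 - 1 / (n : ℝ) ≤ √(1 - 1 / (n : ℝ) ^ 2) := by
    rw [← one_div_pow, Real.le_sqrt (by linarith) (by nlinarith)]
    nlinarith
  calc (n : ℝ) * (1 - √(1 - 1 / (n : ℝ) ^ 2)) ≤ n * (1 / n) := by gcongr; linarith
    _ = 1 := by field_simp

theorem IsProjector.isStarProjection {d : ℕ}
    {E : EuclideanSpace ℂ (Fin d) →L[ℂ] EuclideanSpace ℂ (Fin d)} (hE : IsProjector E) :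
    IsStarProjection E :=
  ⟨hE.2, hE.1⟩

theorem IsPVM.completeOrthogonalIdempotents {d : ℕ} {S : Type} [Fintype S]
    {E : S → (EuclideanSpace ℂ (Fin d) →L[ℂ] EuclideanSpace ℂ (Fin d))} (hE : IsPVM E) :
    CompleteOrthogonalIdempotents E :=
  .of_isStarProjection_of_sum_eq_one (fun s ↦ (hE.1 s).isStarProjection) hE.2

/-- Two commuting PVMs that are both "almost diagonalised" by a common orthonormal basis,
with the threshold `α = sqrt((1/2)(1 + sqrt(1 − 1/d²)))`, must be equal.
The partition `{τ_s : s ∈ S}` of `[d]` is encoded by the map `p : Fin d → S`,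
with `τ_s = p⁻¹(s)`. -/
theorem close_PVMs_equal {d : ℕ} {S : Type} [Fintype S]
    (E F : S → (EuclideanSpace ℂ (Fin d) →L[ℂ] EuclideanSpace ℂ (Fin d)))
    (hE : IsPVM E) (hF : IsPVM F)
    (hcomm : ∀ s t : S, E s ∘L F t = F t ∘L E s)
    (v : Fin d → EuclideanSpace ℂ (Fin d)) (hv : Orthonormal ℂ v)
    (p : Fin d → S)
    (hclose : ∀ j : Fin d,
      Real.sqrt ((1 / 2) * (1 + Real.sqrt (1 - 1 / (d : ℝ) ^ 2))) < ‖E (p j) (v j)‖ ∧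
      Real.sqrt ((1 / 2) * (1 + Real.sqrt (1 - 1 / (d : ℝ) ^ 2))) < ‖F (p j) (v j)‖) :
    ∀ s : S, E s = F s := by
  set β := √(1 - 1 / (d : ℝ) ^ 2)
  have hEp : ∀ s, IsStarProjection (E s) := fun s ↦ (hE.1 s).isStarProjection
  have hFp : ∀ s, IsStarProjection (F s) := fun s ↦ (hF.1 s).isStarProjection
  have hEF : ∀ s t, Commute (E s) (F t) := hcomm
  set Q := ∑ s, E s * F s
  have hQ : IsStarProjection Q :=
    isStarProjection_sum_mul hEp hFp hE.completeOrthogonalIdempotents.ortho hEF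
  have hgap : ∀ j, ‖(1 - Q) (v j)‖ ^ 2 < 1 - β := fun j ↦ by
    have := hQ.norm_one_sub_apply_sq_le (hEp _) (hFp _)
      (add_sub_one_le_sum_mul hEp hFp (fun s ↦ hEF s s) (p j)) (v j)
    rw [hv.1 j] at this
    linarith [Real.lt_sq_of_sqrt_lt (hclose j).1, Real.lt_sq_of_sqrt_lt (hclose j).2]
  let b := OrthonormalBasis.mk hv
    (hv.linearIndependent.span_eq_top_of_card_eq_finrank' (by simp)).ge
  have hQ_one : Q = 1 := by
    refine (sub_eq_zero.mp (hQ.one_sub.eq_zero_of_forall_norm_apply_sq_lt b (c := 1 - β)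
      (by simpa [b] using hgap) ?_)).symm
    rw [Fintype.card_fin]
    exact natCast_mul_one_sub_sqrt_one_sub_one_div_sq_le_one d
  exact congrFun (hE.completeOrthogonalIdempotents.eq_of_sum_mul_eq_one
    hF.completeOrthogonalIdempotents hEF hQ_one)
end
end

section
/- For every n ∈ ℕ and k = ⌈log₂ n + log₂ log₂ n + 2⌉ (with n ≥ 2), the central binomial coefficient C(k, ⌊k/2⌋) is at least n. -/
lemma two_pow_le_succ_mul_choose (k : ℕ) : 2 ^ k ≤ (k + 1) * Nat.choose k (k / 2) := by
  calc 2 ^ k = ∑ i ∈ Finset.range (k + 1), Nat.choose k i := (Nat.sum_range_choose k).symm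
    _ ≤ ∑ _i ∈ Finset.range (k + 1), Nat.choose k (k / 2) :=
        Finset.sum_le_sum fun i _ => Nat.choose_le_middle i k
    _ = (k + 1) * Nat.choose k (k / 2) := by simp [Finset.sum_const, Finset.card_range]

/-- For `n ≥ 2` and `k = ⌈log₂ n + log₂ log₂ n + 2⌉`, the central binomial
coefficient `C(k, ⌊k/2⌋)` is at least `n`. -/
theorem central_binom_ge (n : ℕ) (hn : 2 ≤ n) (k : ℕ)
    (hk : k = ⌈Real.logb 2 n + Real.logb 2 (Real.logb 2 n) + 2⌉₊) :
    n ≤ Nat.choose k (k / 2) := by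
  rcases eq_or_lt_of_le hn with h2 | h3
  · -- n = 2 : k = 3
    subst hk
    rw [← h2]
    norm_num [Real.logb_self_eq_one]
  · -- n ≥ 3
    have hn3 : (3 : ℝ) ≤ (n : ℝ) := by exact_mod_cast h3
    set L : ℝ := Real.logb 2 (n : ℝ) with hL
    have hlog2pos : (0 : ℝ) < Real.log 2 := Real.log_pos (by norm_num)
    -- L ≥ 19/12
    have hlog23 : (19 : ℝ) / 12 ≤ Real.logb 2 3 := by
      have h1 : Real.log ((2:ℝ)^(19:ℕ)) ≤ Real.log ((3:ℝ)^(12:ℕ)) :=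
        Real.log_le_log (by positivity) (by norm_num)
      rw [Real.log_pow, Real.log_pow] at h1
      rw [Real.logb, le_div_iff₀ hlog2pos]
      push_cast at h1
      linarith
    have hLn : Real.logb 2 3 ≤ L := by
      exact Real.logb_le_logb_of_le (by norm_num : (1:ℝ) < 2) (by norm_num) hn3
    have hL19 : (19 : ℝ) / 12 ≤ L := le_trans hlog23 hLn
    have hL1 : (1 : ℝ) < L := by linarith
    have hLpos : (0 : ℝ) < L := by linarith
    have hlogLnn : (0 : ℝ) ≤ Real.logb 2 L := Real.logb_nonneg (by norm_num) (le_of_lt hL1)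
    have hx : (0 : ℝ) ≤ L + Real.logb 2 L + 2 := by linarith
    -- bounds on k
    have hk_lb : L + Real.logb 2 L + 2 ≤ (k : ℝ) := by rw [hk]; exact Nat.le_ceil _
    have hk_ub : (k : ℝ) < L + Real.logb 2 L + 3 := by
      rw [hk]
      have := Nat.ceil_lt_add_one hx
      linarith
    -- key analytic fact : logb 2 L + 4 ≤ 3 L
    have hkey : Real.logb 2 L + 4 ≤ 3 * L := by
      have hsub : Real.log (L / 2) ≤ L / 2 - 1 := Real.log_le_sub_one_of_pos (by linarith)
      have hsplit : Real.log L = Real.log (L / 2) + Real.log 2 := by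
        rw [← Real.log_mul (by linarith) (by norm_num)]
        ring_nf
      have ha : (0.6931471803 : ℝ) < Real.log 2 := Real.log_two_gt_d9
      have hb : Real.log 2 < 0.6931471808 := Real.log_two_lt_d9
      rw [Real.logb, div_add' _ _ _ (ne_of_gt hlog2pos), div_le_iff₀ hlog2pos]
      nlinarith [mul_le_mul_of_nonneg_right hL19 (le_of_lt hlog2pos)]
    -- k + 1 ≤ 4 L
    have hk4L : (k : ℝ) + 1 ≤ 4 * L := by linarith
    -- 2^k ≥ 4 n L
    have hpow : 4 * (n : ℝ) * L ≤ (2 : ℝ) ^ (k : ℝ) := by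
      have : (2 : ℝ) ^ (L + Real.logb 2 L + 2) ≤ (2 : ℝ) ^ (k : ℝ) :=
        Real.rpow_le_rpow_of_exponent_le (by norm_num) hk_lb
      calc 4 * (n : ℝ) * L = (2:ℝ) ^ L * (2:ℝ) ^ (Real.logb 2 L) * (2:ℝ) ^ (2:ℝ) := by
            rw [Real.rpow_logb (by norm_num) (by norm_num) (by positivity),
              Real.rpow_logb (by norm_num) (by norm_num) hLpos]
            norm_num; ring
        _ = (2 : ℝ) ^ (L + Real.logb 2 L + 2) := by
            rw [← Real.rpow_add (by norm_num), ← Real.rpow_add (by norm_num)]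
        _ ≤ (2 : ℝ) ^ (k : ℝ) := this
    -- n (k+1) ≤ 2^k in ℝ, then in ℕ
    have hreal : (n : ℝ) * ((k : ℝ) + 1) ≤ (2 : ℝ) ^ (k : ℝ) := by
      have hnpos : (0 : ℝ) < n := by linarith
      nlinarith
    have hnat : n * (k + 1) ≤ 2 ^ k := by
      have : ((n * (k + 1) : ℕ) : ℝ) ≤ ((2 ^ k : ℕ) : ℝ) := by
        push_cast
        rw [← Real.rpow_natCast 2 k] at *
        linarith [hreal]
      exact_mod_cast this
    have := le_trans hnat (two_pow_le_succ_mul_choose k)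
    have hkpos : 0 < k + 1 := Nat.succ_pos k
    calc n = n * (k+1) / (k+1) := by rw [Nat.mul_div_cancel _ hkpos]
      _ ≤ (k+1) * Nat.choose k (k/2) / (k+1) := Nat.div_le_div_right this
      _ = Nat.choose k (k/2) := by rw [Nat.mul_div_cancel_left _ hkpos]
end

section
/- Let Y be a digraph containing at least one arc (y₁, y₂). Let S ⊆ {y₁,y₂}^k be the set of k-tuples with exactly ⌊k/2⌋ entries equal to y₁. Then any two distinct tuples t⁽¹⁾, t⁽²⁾ ∈ S are joined by arcs in both directions in the k-fold Alice power Y↑k; consequently, if C(k, ⌊k/2⌋) ≥ m, there is a homomorphism from the clique K_m to Y↑k. -/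
/-- Membership in the set `S` of balanced `{y₁,y₂}`-tuples: every entry is `y₁` or `y₂`,
and exactly `⌊k/2⌋` entries equal `y₁`. -/
def balanced {α : Type} [DecidableEq α] (y₁ y₂ : α) (k : ℕ) (t : Fin k → α) : Prop :=
  (∀ j : Fin k, t j = y₁ ∨ t j = y₂) ∧
    (Finset.univ.filter (fun j : Fin k => t j = y₁)).card = k / 2

lemma sdiff_nonempty_of_card_eq_ne {β : Type*} [DecidableEq β] {A B : Finset β}
    (h : A.card = B.card) (hne : A ≠ B) : (A \ B).Nonempty := by
  rw [Finset.sdiff_nonempty]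
  intro hsub
  exact hne (Finset.eq_of_subset_of_card_le hsub h.ge)

/-- Any two distinct balanced `{y₁,y₂}`-tuples are joined by arcs in both directions in the
Alice power `Y↑k`; consequently, if `m ≤ C(k, ⌊k/2⌋)`, there is a homomorphism from the
clique `K_m` to `Y↑k`. -/
theorem balanced_tuples_clique {α : Type} [DecidableEq α]
    (E : α → α → Prop) (y₁ y₂ : α) (hE : E y₁ y₂) (k : ℕ) :
    (∀ t₁ t₂ : Fin k → α, balanced y₁ y₂ k t₁ → balanced y₁ y₂ k t₂ → t₁ ≠ t₂ →
      aliceArc E k t₁ t₂ ∧ aliceArc E k t₂ t₁) ∧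
    (∀ m : ℕ, m ≤ Nat.choose k (k / 2) →
      ∃ f : Fin m → (Fin k → α),
        ∀ a b : Fin m, a ≠ b → aliceArc E k (f a) (f b)) := by
  constructor
  · intro t₁ t₂ h₁ h₂ hne
    set A := Finset.univ.filter (fun j : Fin k => t₁ j = y₁) with hA
    set B := Finset.univ.filter (fun j : Fin k => t₂ j = y₁) with hB
    have hcard : A.card = B.card := by rw [h₁.2, h₂.2]
    have hy : y₁ ≠ y₂ := by
      intro hy
      apply hne
      funext j
      have hk : 0 < k := j.pos
      have hAuniv : A = Finset.univ := by
        apply Finset.eq_univ_of_forall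
        intro i
        simp only [hA, Finset.mem_filter, Finset.mem_univ, true_and]
        rcases h₁.1 i with h | h
        · exact h
        · rw [h, hy]
      have hc : A.card = k := by rw [hAuniv, Finset.card_univ, Fintype.card_fin]
      have h2 := h₁.2
      rw [← hA] at h2
      have := Nat.div_lt_self hk Nat.one_lt_two
      omega
    have hAB : A ≠ B := by
      intro hAB
      apply hne
      funext j
      rcases h₁.1 j with h | h <;> rcases h₂.1 j with h' | h'
      · rw [h, h']
      · exfalso
        have hjA : j ∈ A := by simp [hA, h]
        rw [hAB] at hjA
        simp only [hB, Finset.mem_filter] at hjA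
        exact hy (hjA.2.symm.trans h')
      · exfalso
        have hjB : j ∈ B := by simp [hB, h']
        rw [← hAB] at hjB
        simp only [hA, Finset.mem_filter] at hjB
        exact hy (hjB.2.symm.trans h)
      · rw [h, h']
    obtain ⟨j, hj⟩ := sdiff_nonempty_of_card_eq_ne hcard hAB
    obtain ⟨i, hi⟩ := sdiff_nonempty_of_card_eq_ne hcard.symm hAB.symm
    simp only [hA, hB, Finset.mem_sdiff, Finset.mem_filter, Finset.mem_univ, true_and] at hj hi
    have ht₂j : t₂ j = y₂ := (h₂.1 j).resolve_left hj.2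
    have ht₁i : t₁ i = y₂ := (h₁.1 i).resolve_left hi.2
    constructor
    · exact ⟨j, by rw [hj.1, ht₂j]; exact hE⟩
    · exact ⟨i, by rw [hi.1, ht₁i]; exact hE⟩
  · intro m hm
    set S := (Finset.univ : Finset (Fin k)).powersetCard (k / 2) with hS
    have hcardS : S.card = Nat.choose k (k / 2) := by
      simp [hS, Finset.card_powersetCard]
    have hle : Fintype.card (Fin m) ≤ Fintype.card {x // x ∈ S} := by
      rw [Fintype.card_fin, Fintype.card_coe, hcardS]; exact hm
    obtain ⟨g⟩ := Function.Embedding.nonempty_of_card_le hle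
    refine ⟨fun a j => if j ∈ (g a : Finset (Fin k)) then y₁ else y₂, ?_⟩
    intro a b hab
    have hgne : (g a : Finset (Fin k)) ≠ (g b : Finset (Fin k)) := by
      intro h
      exact hab (g.injective (Subtype.ext h))
    have hcards : ((g a : Finset (Fin k))).card = ((g b : Finset (Fin k))).card := by
      have ha := (g a).2
      have hb := (g b).2
      simp only [hS, Finset.mem_powersetCard] at ha hb
      rw [ha.2, hb.2]
    obtain ⟨j, hj⟩ := sdiff_nonempty_of_card_eq_ne hcards hgne
    rw [Finset.mem_sdiff] at hj
    exact ⟨j, by simp [hj.1, hj.2, hE]⟩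
end
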